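/- The unique minimizer x* of Γ over (ℓ, u) lies in the middle-third interval I := [ℓ + (u-ℓ)/3, u - (u-ℓ)/3]. -/

import Mathlib

/-!
Γ is the sum of the log barriers of the intervals (x_L, x_R) and (-Δ, Δ), so Γ'(x*) = 0 reads
1/(x* - x_L) + 1/(x* + Δ) = 1/(x_R - x*) + 1/(Δ - x*).
The left side lies between 1/(x* - ℓ) and 2/(x* - ℓ), because x* - ℓ is the smaller of its two
denominators; likewise the right side lies between 1/(u - x*) and 2/(u - x*). Hence each of the
distances x* - ℓ and u - x* is at most twice the other, which is the middle-third condition.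
-/

open Real Set

noncomputable def logBarrier (a c x : ℝ) : ℝ := -log (x - a) - log (c - x)

theorem hasDerivAt_logBarrier {a c x : ℝ} (ha : a < x) (hc : x < c) :
    HasDerivAt (logBarrier a c) ((c - x)⁻¹ - (x - a)⁻¹) x := by
  have hleft : HasDerivAt (fun y => log (y - a)) (x - a)⁻¹ x := by
    simpa using ((hasDerivAt_id x).sub_const a).log (sub_pos.mpr ha).ne'
  have hright : HasDerivAt (fun y => log (c - y)) (-(c - x)⁻¹) x := by
    simpa [div_eq_mul_inv] using ((hasDerivAt_id x).const_sub c).log (sub_pos.mpr hc).ne'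
  exact (hleft.neg.sub hright).congr_deriv (by ring)

theorem inv_min_le_inv_add_inv {p q : ℝ} (hp : 0 < p) (hq : 0 < q) :
    (min p q)⁻¹ ≤ p⁻¹ + q⁻¹ := by
  rcases min_choice p q with h | h <;> rw [h]
  · exact le_add_of_nonneg_right (inv_nonneg.mpr hq.le)
  · exact le_add_of_nonneg_left (inv_nonneg.mpr hp.le)

theorem inv_add_inv_le_two_div_min {p q : ℝ} (hp : 0 < p) (hq : 0 < q) :
    p⁻¹ + q⁻¹ ≤ 2 / min p q := by
  have hmin : 0 < min p q := lt_min hp hq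
  have hp' : p⁻¹ ≤ (min p q)⁻¹ := inv_anti₀ hmin (min_le_left p q)
  have hq' : q⁻¹ ≤ (min p q)⁻¹ := inv_anti₀ hmin (min_le_right p q)
  rw [div_eq_mul_inv, two_mul]
  exact add_le_add hp' hq'

theorem min_le_two_mul_min_of_inv_add_inv_eq {p₁ p₂ q₁ q₂ : ℝ} (hp₁ : 0 < p₁) (hp₂ : 0 < p₂)
    (hq₁ : 0 < q₁) (hq₂ : 0 < q₂) (h : p₁⁻¹ + p₂⁻¹ = q₁⁻¹ + q₂⁻¹) :
    min p₁ p₂ ≤ 2 * min q₁ q₂ := by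
  have hp : 0 < min p₁ p₂ := lt_min hp₁ hp₂
  have hq : 0 < min q₁ q₂ := lt_min hq₁ hq₂
  have key : 1 / min q₁ q₂ ≤ 2 / min p₁ p₂ :=
    calc 1 / min q₁ q₂ = (min q₁ q₂)⁻¹ := one_div _
      _ ≤ q₁⁻¹ + q₂⁻¹ := inv_min_le_inv_add_inv hq₁ hq₂
      _ = p₁⁻¹ + p₂⁻¹ := h.symm
      _ ≤ 2 / min p₁ p₂ := inv_add_inv_le_two_div_min hp₁ hp₂
  rw [div_le_div_iff₀ hq hp] at key
  linarith

theorem mem_Icc_middle_third {ℓ u x : ℝ} (hl : x - ℓ ≤ 2 * (u - x)) (hu : u - x ≤ 2 * (x - ℓ)) :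
    x ∈ Icc (ℓ + (u - ℓ) / 3) (u - (u - ℓ) / 3) :=
  ⟨by linarith, by linarith⟩

theorem mem_Icc_middle_third_of_isLocalMin_logBarrier_add {a₁ c₁ a₂ c₂ x : ℝ}
    (ha : max a₁ a₂ < x) (hc : x < min c₁ c₂)
    (hx : IsLocalMin (fun y => logBarrier a₁ c₁ y + logBarrier a₂ c₂ y) x) :
    x ∈ Icc (max a₁ a₂ + (min c₁ c₂ - max a₁ a₂) / 3)
      (min c₁ c₂ - (min c₁ c₂ - max a₁ a₂) / 3) := by
  obtain ⟨ha₁, ha₂⟩ := max_lt_iff.mp ha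
  obtain ⟨hc₁, hc₂⟩ := lt_min_iff.mp hc
  have hcrit : (x - a₁)⁻¹ + (x - a₂)⁻¹ = (c₁ - x)⁻¹ + (c₂ - x)⁻¹ := by
    have := hx.hasDerivAt_eq_zero
      ((hasDerivAt_logBarrier ha₁ hc₁).add (hasDerivAt_logBarrier ha₂ hc₂))
    linarith
  have hl := min_le_two_mul_min_of_inv_add_inv_eq (sub_pos.mpr ha₁) (sub_pos.mpr ha₂)
    (sub_pos.mpr hc₁) (sub_pos.mpr hc₂) hcrit
  have hu := min_le_two_mul_min_of_inv_add_inv_eq (sub_pos.mpr hc₁) (sub_pos.mpr hc₂)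
    (sub_pos.mpr ha₁) (sub_pos.mpr ha₂) hcrit.symm
  rw [min_sub_sub_left, min_sub_sub_right] at hl hu
  exact mem_Icc_middle_third hl hu

theorem stmt_8_general (xL xR Δ : ℝ) (ℓ u : ℝ)
    (hℓ : ℓ = max (-Δ) xL) (hu : u = min Δ xR)
    (Γ : ℝ → ℝ)
    (hΓ : ∀ x, Γ x = -Real.log (x - xL) - Real.log (xR - x)
      - Real.log (Δ + x) - Real.log (Δ - x))
    (xstar : ℝ) (hmem : xstar ∈ Set.Ioo ℓ u) (hmin : IsMinOn Γ (Set.Ioo ℓ u) xstar) :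
    xstar ∈ Set.Icc (ℓ + (u - ℓ) / 3) (u - (u - ℓ) / 3) := by
  have hΓ_eq : Γ = fun y => logBarrier (-Δ) Δ y + logBarrier xL xR y := by
    ext y
    rw [hΓ, logBarrier, logBarrier, sub_neg_eq_add, add_comm y Δ]
    ring
  subst hℓ hu
  rw [hΓ_eq] at hmin
  exact mem_Icc_middle_third_of_isLocalMin_logBarrier_add hmem.1 hmem.2
    (hmin.isLocalMin (Ioo_mem_nhds hmem.1 hmem.2))

/-- The unique minimizer `x*` of `Γ` over `(ℓ, u)` lies in the middle-third
interval `I = [ℓ+(u-ℓ)/3, u-(u-ℓ)/3]`. -/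
theorem stmt_8 (xL xR Δ : ℝ) (hΔ : 0 < Δ) (ℓ u : ℝ)
    (hℓ : ℓ = max (-Δ) xL) (hu : u = min Δ xR) (hℓu : ℓ < u)
    (Γ : ℝ → ℝ)
    (hΓ : ∀ x, Γ x = -Real.log (x - xL) - Real.log (xR - x)
      - Real.log (Δ + x) - Real.log (Δ - x))
    (xstar : ℝ) (hmem : xstar ∈ Set.Ioo ℓ u) (hmin : IsMinOn Γ (Set.Ioo ℓ u) xstar) :
    xstar ∈ Set.Icc (ℓ + (u - ℓ) / 3) (u - (u - ℓ) / 3) :=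
  stmt_8_general xL xR Δ ℓ u hℓ hu Γ hΓ xstar hmem hmin
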